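/- arXiv:1601.02586 — 3 statements merged into one kernel-verified Lean document; each statement's English description precedes it below -/
import Mathlib

section
/- Averaging the squared modulus of the Vandermonde determinant over independent uniform phases yields a permanent: for positive reals a_1,…,a_n, ∫_{[0,2π]^n} |Δ_n(√a_1 e^{iφ_1},…,√a_n e^{iφ_n})|^2 ∏_j dφ_j/(2π) = Perm[a_b^{c-1}]_{b,c=1,…,n}, where Δ_n(x) = ∏_{b<c}(x_c − x_b) and Perm denotes the permanent. -/
/-!
Expanding the Vandermonde determinant over permutations, `Δ(z) = ∑_σ sgn σ ∏_b z_b^{σ b}`, gives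
`|Δ(z)|² = ∑_{σ,τ} sgn σ sgn τ ∏_b z_b^{σ b} conj(z_b)^{τ b}`. For `z_b = r_b e^{iφ_b}` each term
is a product of one-variable functions, so its torus integral factors, and the `b`-th factor
`∫₀^{2π} r_b^{σ b + τ b} e^{i(σ b - τ b)φ} dφ` vanishes unless `σ b = τ b`. Only the diagonal
`σ = τ` survives, leaving `(2π)^n ∑_σ ∏_b r_b^{2 σ b}`; with `r_b = √a_b` this is the permanent.
-/

open MeasureTheory Complex Finset ComplexConjugate

theorem prod_filter_lt_sub_eq_sum_sign_mul_prod_pow {R : Type*} [CommRing R] {n : ℕ}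
    (f : Fin n → R) :
    ∏ p ∈ univ.filter (fun p : Fin n × Fin n => p.1 < p.2), (f p.2 - f p.1)
      = ∑ σ : Equiv.Perm (Fin n), ((Equiv.Perm.sign σ : ℤ) : R) * ∏ b, f b ^ (σ b : ℕ) := by
  have hdet : ∏ p ∈ univ.filter (fun p : Fin n × Fin n => p.1 < p.2), (f p.2 - f p.1)
      = (Matrix.vandermonde f).det := by
    rw [Matrix.det_vandermonde, prod_filter, Fintype.prod_prod_type]
    refine prod_congr rfl fun i _ => ?_
    rw [← filter_lt_eq_Ioi, prod_filter]
  rw [hdet, ← Matrix.det_transpose, Matrix.det_apply']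
  rfl

theorem ofReal_sq_norm_sum_intCast_mul {κ : Type*} (s : Finset κ) (c : κ → ℤ) (z : κ → ℂ) :
    ((‖∑ k ∈ s, (c k : ℂ) * z k‖ ^ 2 : ℝ) : ℂ)
      = ∑ k ∈ s, ∑ l ∈ s, ((c k * c l : ℤ) : ℂ) * (z k * conj (z l)) := by
  rw [ofReal_pow, ← mul_conj', map_sum, sum_mul_sum]
  refine sum_congr rfl fun k _ => sum_congr rfl fun l _ => ?_
  rw [map_mul, map_intCast]
  push_cast
  ring

theorem ofReal_sq_norm_prod_filter_lt_sub {n : ℕ} (z : Fin n → ℂ) :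
    ((‖∏ p ∈ univ.filter (fun p : Fin n × Fin n => p.1 < p.2), (z p.2 - z p.1)‖ ^ 2 : ℝ) : ℂ)
      = ∑ σ : Equiv.Perm (Fin n), ∑ τ : Equiv.Perm (Fin n),
          ((Equiv.Perm.sign σ * Equiv.Perm.sign τ : ℤ) : ℂ) *
            ∏ b, z b ^ (σ b : ℕ) * conj (z b) ^ (τ b : ℕ) := by
  simp_rw [prod_filter_lt_sub_eq_sum_sign_mul_prod_pow, ofReal_sq_norm_sum_intCast_mul, map_prod,
    map_pow, prod_mul_distrib]

theorem setIntegral_Ioc_exp_int_mul_I (m : ℤ) :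
    ∫ t in Set.Ioc 0 (2 * Real.pi), exp (m * t * I)
      = if m = 0 then ((2 * Real.pi : ℝ) : ℂ) else 0 := by
  rw [← intervalIntegral.integral_of_le Real.two_pi_pos.le]
  split_ifs with hm
  · simp [hm]
  · have hmI : (m : ℂ) * I ≠ 0 := by simp [hm]
    simp_rw [mul_right_comm (m : ℂ) _ I]
    rw [integral_exp_mul_complex hmI,
      show (m : ℂ) * I * ((2 * Real.pi : ℝ) : ℂ) = m * (2 * Real.pi * I) by push_cast; ring]
    simp [exp_int_mul_two_pi_mul_I]

theorem ofReal_mul_exp_pow_mul_conj_pow (r t : ℝ) (k l : ℕ) :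
    ((r : ℂ) * exp (I * t)) ^ k * conj ((r : ℂ) * exp (I * t)) ^ l
      = (r : ℂ) ^ (k + l) * exp (((k - l : ℤ) : ℂ) * t * I) := by
  rw [map_mul, conj_ofReal, ← exp_conj, map_mul, conj_I, conj_ofReal, mul_pow, mul_pow,
    ← exp_nat_mul, ← exp_nat_mul, mul_mul_mul_comm, ← exp_add, ← pow_add]
  congr 2
  push_cast
  ring

theorem setIntegral_Ioc_ofReal_mul_exp_pow_mul_conj_pow (r : ℝ) (k l : ℕ) :
    ∫ t in Set.Ioc 0 (2 * Real.pi), ((r : ℂ) * exp (I * t)) ^ k * conj ((r : ℂ) * exp (I * t)) ^ l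
      = if k = l then ((2 * Real.pi * r ^ (2 * k) : ℝ) : ℂ) else 0 := by
  simp_rw [ofReal_mul_exp_pow_mul_conj_pow]
  rw [integral_const_mul, setIntegral_Ioc_exp_int_mul_I]
  by_cases hkl : k = l
  · subst hkl
    simp only [sub_self, if_true]
    push_cast
    ring
  · rw [if_neg (by omega), if_neg hkl, mul_zero]

theorem setIntegral_univ_pi_prod {ι 𝕜 : Type*} [Fintype ι] [RCLike 𝕜] {E : ι → Type*}
    [∀ i, MeasureSpace (E i)] [∀ i, SigmaFinite (volume : Measure (E i))]
    (s : (i : ι) → Set (E i)) (g : (i : ι) → E i → 𝕜) :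
    ∫ x in Set.univ.pi s, ∏ i, g i (x i) = ∏ i, ∫ t in s i, g i t := by
  rw [volume_pi, Measure.restrict_pi_pi, integral_fintype_prod_eq_prod]

theorem setIntegral_torus_prod_pow_mul_conj_pow {ι : Type*} [Fintype ι] (r : ι → ℝ)
    (k l : ι → ℕ) :
    ∫ φ in Set.univ.pi (fun _ : ι => Set.Ioc 0 (2 * Real.pi)),
        ∏ i, ((r i : ℂ) * exp (I * φ i)) ^ k i * conj ((r i : ℂ) * exp (I * φ i)) ^ l i
      = if k = l then (((2 * Real.pi) ^ Fintype.card ι * ∏ i, r i ^ (2 * k i) : ℝ) : ℂ) else 0 := by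
  rw [setIntegral_univ_pi_prod (fun _ => Set.Ioc 0 (2 * Real.pi))
    (fun i t => ((r i : ℂ) * exp (I * t)) ^ k i * conj ((r i : ℂ) * exp (I * t)) ^ l i)]
  simp_rw [setIntegral_Ioc_ofReal_mul_exp_pow_mul_conj_pow, Fintype.prod_ite_zero, funext_iff]
  push_cast
  rw [prod_mul_distrib, prod_const, card_univ]

theorem Continuous.integrableOn_univ_pi_Ioc {ι E : Type*} [Fintype ι] [NormedAddCommGroup E]
    {f : (ι → ℝ) → E} (hf : Continuous f) (a b : ℝ) :
    IntegrableOn f (Set.univ.pi fun _ : ι => Set.Ioc a b) := by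
  refine (hf.integrableOn_Icc (a := fun _ => a) (b := fun _ => b)).mono_set ?_
  rw [← Set.pi_univ_Icc]
  exact Set.pi_mono fun _ _ => Set.Ioc_subset_Icc_self

theorem setIntegral_torus_sq_norm_prod_filter_lt_sub {n : ℕ} (r : Fin n → ℝ) :
    ∫ φ in Set.univ.pi (fun _ : Fin n => Set.Ioc 0 (2 * Real.pi)),
        ‖∏ p ∈ univ.filter (fun p : Fin n × Fin n => p.1 < p.2),
          ((r p.2 : ℂ) * exp (I * φ p.2) - (r p.1 : ℂ) * exp (I * φ p.1))‖ ^ 2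
      = (2 * Real.pi) ^ n * ∑ σ : Equiv.Perm (Fin n), ∏ b, r b ^ (2 * (σ b : ℕ)) := by
  set z : (Fin n → ℝ) → Fin n → ℂ := fun φ b => (r b : ℂ) * exp (I * φ b)
  have hterm (σ τ : Equiv.Perm (Fin n)) :
      ∫ φ in Set.univ.pi (fun _ : Fin n => Set.Ioc 0 (2 * Real.pi)),
          ∏ b, z φ b ^ (σ b : ℕ) * conj (z φ b) ^ (τ b : ℕ)
        = if σ = τ then (((2 * Real.pi) ^ n * ∏ b, r b ^ (2 * (σ b : ℕ)) : ℝ) : ℂ) else 0 := by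
    have hval : (fun b => (σ b : ℕ)) = (fun b => (τ b : ℕ)) ↔ σ = τ := by
      simp [funext_iff, Fin.val_inj, Equiv.ext_iff]
    rw [setIntegral_torus_prod_pow_mul_conj_pow r (fun b => σ b) (fun b => τ b)]
    simp_rw [hval, Fintype.card_fin]
  have hint (σ τ : Equiv.Perm (Fin n)) :
      IntegrableOn (fun φ => ((Equiv.Perm.sign σ * Equiv.Perm.sign τ : ℤ) : ℂ) *
          ∏ b, z φ b ^ (σ b : ℕ) * conj (z φ b) ^ (τ b : ℕ))
        (Set.univ.pi fun _ : Fin n => Set.Ioc 0 (2 * Real.pi)) :=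
    Continuous.integrableOn_univ_pi_Ioc (by fun_prop) _ _
  apply Complex.ofReal_injective
  rw [← integral_complex_ofReal,
    setIntegral_congr_fun (MeasurableSet.univ_pi fun _ => measurableSet_Ioc)
      fun φ _ => ofReal_sq_norm_prod_filter_lt_sub (z φ)]
  rw [integral_finsetSum _ fun σ _ => integrable_finsetSum _ fun τ _ => hint σ τ]
  simp_rw [integral_finsetSum _ fun τ _ => hint _ τ, integral_const_mul, hterm, mul_ite,
    mul_zero, sum_ite_eq, mem_univ, if_true, ← Units.val_mul, Int.units_mul_self, Units.val_one,
    Int.cast_one, one_mul]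
  push_cast
  rw [mul_sum]

/-- Averaging the squared modulus of the Vandermonde determinant over independent
uniform phases yields a permanent: for positive reals `a 1, …, a n`,
`∫_{[0,2π]^n} |Δ_n(√a_1 e^{iφ_1},…,√a_n e^{iφ_n})|² ∏ dφ_j/(2π) = Perm[a_b^{c-1}]`. -/
theorem phase_average_vandermonde_sq_eq_permanent
    (n : ℕ) (a : Fin n → ℝ) (ha : ∀ j, 0 < a j) :
    (1 / (2 * Real.pi) ^ n) *
      ∫ φ in Set.pi Set.univ (fun _ : Fin n => Set.Ioc (0 : ℝ) (2 * Real.pi)),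
        (‖(∏ p ∈ Finset.univ.filter (fun p : Fin n × Fin n => p.1 < p.2),
          ((Real.sqrt (a p.2) : ℂ) * Complex.exp (Complex.I * (φ p.2)) -
           (Real.sqrt (a p.1) : ℂ) * Complex.exp (Complex.I * (φ p.1))))‖) ^ 2
    = ∑ σ : Equiv.Perm (Fin n), ∏ b, (a b) ^ ((σ b : ℕ)) := by
  have hsqrt (b : Fin n) (k : ℕ) : √(a b) ^ (2 * k) = a b ^ k := by
    rw [pow_mul, Real.sq_sqrt (ha b).le]
  rw [setIntegral_torus_sq_norm_prod_filter_lt_sub (fun b => √(a b)), one_div,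
    inv_mul_cancel_left₀ (by positivity)]
  simp_rw [hsqrt]
end

section
/- Laguerre weight determinant identity: for the weight ω(a) = a^ν e^{−a} with ν ∈ ℝ and positive reals a_1,…,a_n, one has det[(−a_k ∂_{a_k})^{j−1} ω(a_k)]_{j,k=1,…,n} = Δ_n(a) · (∏_{j=1}^n a_j^ν) · e^{−∑_j a_j}, where Δ_n(a) = ∏_{b<c}(a_c − a_b). -/
/-!
Write `w(x) = x^ν e^{-x}`. For `x > 0`, `-x ∂ₓ (p(x) w(x)) = ((x - ν) p(x) - x p'(x)) w(x)`, so
`(-x ∂ₓ)^j w = P_j · w` for a monic polynomial `P_j` of degree `j`. Pulling the factor `w(a_k)`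
out of each column leaves the matrix `(P_j(a_k))`, whose determinant is the Vandermonde
determinant because row operations reduce monic `P_j` of degree `j` to `X^j`.
-/

open Finset Polynomial

namespace Polynomial

variable {R : Type*} [CommRing R]

theorem natDegree_X_mul_derivative_le (p : R[X]) : (X * derivative p).natDegree ≤ p.natDegree := by
  rcases Nat.eq_zero_or_pos p.natDegree with hp | hp
  · simp [derivative_of_natDegree_zero hp]
  · have := natDegree_derivative_le p
    have := natDegree_mul_le (p := X) (q := derivative p)
    have := natDegree_X_le (R := R)
    omega

/-- The polynomial `Q` with `-x ∂ₓ (p(x) x^ν e^{-x}) = Q(x) x^ν e^{-x}`. -/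
noncomputable def laguerreWeightStep (ν : R) (p : R[X]) : R[X] :=
  (X - C ν) * p - X * derivative p

noncomputable def laguerreWeightPoly (ν : R) (j : ℕ) : R[X] :=
  (laguerreWeightStep ν)^[j] 1

theorem laguerreWeightPoly_succ (ν : R) (j : ℕ) :
    laguerreWeightPoly ν (j + 1) = laguerreWeightStep ν (laguerreWeightPoly ν j) :=
  Function.iterate_succ_apply' _ _ _

variable [Nontrivial R]

theorem natDegree_X_mul_derivative_lt {p : R[X]} (hp : p.Monic) (ν : R) :
    (X * derivative p).natDegree < ((X - C ν) * p).natDegree := by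
  rw [(monic_X_sub_C ν).natDegree_mul hp, natDegree_X_sub_C, add_comm]
  exact Nat.lt_succ_of_le (natDegree_X_mul_derivative_le p)

theorem natDegree_laguerreWeightStep {p : R[X]} (hp : p.Monic) (ν : R) :
    (laguerreWeightStep ν p).natDegree = p.natDegree + 1 := by
  rw [laguerreWeightStep, natDegree_sub_eq_left_of_natDegree_lt (natDegree_X_mul_derivative_lt hp ν),
    (monic_X_sub_C ν).natDegree_mul hp, natDegree_X_sub_C, add_comm]

theorem Monic.laguerreWeightStep {p : R[X]} (hp : p.Monic) (ν : R) :
    (laguerreWeightStep ν p).Monic :=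
  ((monic_X_sub_C ν).mul hp).sub_of_left (degree_lt_degree (natDegree_X_mul_derivative_lt hp ν))

theorem monic_laguerreWeightPoly (ν : R) (j : ℕ) : (laguerreWeightPoly ν j).Monic := by
  induction j with
  | zero => exact monic_one
  | succ j ih =>
    rw [laguerreWeightPoly_succ]
    exact ih.laguerreWeightStep ν

theorem natDegree_laguerreWeightPoly (ν : R) (j : ℕ) : (laguerreWeightPoly ν j).natDegree = j := by
  induction j with
  | zero => exact natDegree_one
  | succ j ih =>
    rw [laguerreWeightPoly_succ, natDegree_laguerreWeightStep (monic_laguerreWeightPoly ν j), ih]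

end Polynomial

theorem neg_mul_deriv_eval_mul_rpow_mul_exp (p : ℝ[X]) (ν : ℝ) {x : ℝ} (hx : 0 < x) :
    -x * deriv (fun t => p.eval t * (t ^ ν * Real.exp (-t))) x
      = (laguerreWeightStep ν p).eval x * (x ^ ν * Real.exp (-x)) := by
  have hpow : HasDerivAt (fun t : ℝ => t ^ ν) (ν * x ^ (ν - 1)) x := by
    simpa using Real.hasDerivAt_rpow_const (p := ν) (Or.inl hx.ne')
  have hderiv : HasDerivAt (fun t => p.eval t * (t ^ ν * Real.exp (-t))) _ x :=
    (p.hasDerivAt x).mul (hpow.mul (hasDerivAt_neg x).exp)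
  have hrpow : x * x ^ (ν - 1) = x ^ ν := by
    rw [mul_comm, ← Real.rpow_add_one hx.ne', sub_add_cancel]
  rw [hderiv.deriv]
  simp only [laguerreWeightStep, eval_sub, eval_mul, eval_X, eval_C]
  linear_combination (-(ν * p.eval x * Real.exp (-x))) * hrpow

theorem iterate_neg_mul_deriv_rpow_mul_exp (ν : ℝ) (j : ℕ) {x : ℝ} (hx : 0 < x) :
    (fun g x => -x * deriv g x)^[j] (fun x => x ^ ν * Real.exp (-x)) x
      = (laguerreWeightPoly ν j).eval x * (x ^ ν * Real.exp (-x)) := by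
  induction j generalizing x with
  | zero => simp [laguerreWeightPoly]
  | succ j ih =>
    have hlocal : (fun g x => -x * deriv g x)^[j] (fun x => x ^ ν * Real.exp (-x))
        =ᶠ[nhds x] fun t => (laguerreWeightPoly ν j).eval t * (t ^ ν * Real.exp (-t)) :=
      Filter.eventually_of_mem (Ioi_mem_nhds hx) fun y hy => ih hy
    rw [Function.iterate_succ_apply', hlocal.deriv_eq, neg_mul_deriv_eval_mul_rpow_mul_exp _ _ hx,
      laguerreWeightPoly_succ]

theorem Matrix.det_of_mul_eval_monic {R : Type*} [CommRing R] {n : ℕ} (c v : Fin n → R)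
    (p : ℕ → R[X]) (h_deg : ∀ i, (p i).natDegree = i) (h_monic : ∀ i, (p i).Monic) :
    (Matrix.of fun j k : Fin n => c k * (p j).eval (v k)).det
      = (∏ k, c k) * ∏ i : Fin n, ∏ j ∈ Ioi i, (v j - v i) := by
  refine (Matrix.det_mul_row c (Matrix.of fun j k : Fin n => (p j).eval (v k))).trans ?_
  rw [← Matrix.det_vandermonde,
    Matrix.det_eval_matrixOfPolynomials_eq_det_vandermonde v (fun i => p i)
      (fun i => h_deg i) (fun i => h_monic i), ← Matrix.det_transpose]
  rfl

theorem Finset.prod_filter_fst_lt_snd {α M : Type*} [Fintype α] [LinearOrder α]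
    [LocallyFiniteOrderTop α] [CommMonoid M] (f : α → α → M) :
    ∏ p ∈ univ.filter (fun p : α × α => p.1 < p.2), f p.1 p.2 = ∏ i, ∏ j ∈ Ioi i, f i j := by
  rw [prod_filter, ← univ_product_univ, prod_product]
  refine prod_congr rfl fun i _ => ?_
  rw [← prod_filter]
  exact prod_congr (by ext; simp) fun _ _ => rfl

/-- Laguerre weight determinant identity: for `ω(a) = a^ν e^{−a}` and positive reals
`a 1, …, a n`, `det[(−a_k ∂)^{j−1} ω(a_k)] = Δ_n(a) · ∏ a_j^ν · e^{−∑ a_j}`. -/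
theorem laguerre_weight_derivative_determinant
    (n : ℕ) (ν : ℝ) (a : Fin n → ℝ) (ha : ∀ k, 0 < a k)
    (ω : ℝ → ℝ) (hω : ω = fun x => x ^ ν * Real.exp (-x))
    (D : (ℝ → ℝ) → (ℝ → ℝ)) (hD : D = fun g x => -x * deriv g x) :
    Matrix.det (Matrix.of fun j k : Fin n => D^[(j : ℕ)] ω (a k))
      = (∏ p ∈ Finset.univ.filter (fun p : Fin n × Fin n => p.1 < p.2),
          (a p.2 - a p.1)) *
        (∏ j, (a j) ^ ν) * Real.exp (-(∑ j, a j)) := by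
  subst hω hD
  have hentries : (Matrix.of fun j k : Fin n =>
      (fun g x => -x * deriv g x)^[(j : ℕ)] (fun x => x ^ ν * Real.exp (-x)) (a k))
      = Matrix.of fun j k : Fin n =>
          (a k ^ ν * Real.exp (-a k)) * (laguerreWeightPoly ν j).eval (a k) := by
    ext j k
    rw [Matrix.of_apply, Matrix.of_apply, iterate_neg_mul_deriv_rpow_mul_exp ν j (ha k), mul_comm]
  have hweights : ∏ k, (a k ^ ν * Real.exp (-a k)) = (∏ k, a k ^ ν) * Real.exp (-∑ k, a k) := by
    rw [prod_mul_distrib, ← Real.exp_sum, sum_neg_distrib]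
  rw [hentries, Matrix.det_of_mul_eval_monic _ a _ (natDegree_laguerreWeightPoly ν)
    (monic_laguerreWeightPoly ν), hweights, prod_filter_fst_lt_snd fun i j => a j - a i]
  ring
end

section
/- Normalization constant for polynomial ensembles of derivative type: if ω : (0,∞) → ℂ is (n−1)-times differentiable with y ↦ y^{k−1}(−y∂_y)^{j−1}ω(y) integrable on (0,∞) for all 1 ≤ j,k ≤ n (with vanishing boundary terms so that M[(−a∂_a)^{j−1}ω](k) = k^{j−1} M[ω](k)), then n! · det[ ∫_0^∞ a^{k−1} (−a∂_a)^{j−1} ω(a) da ]_{j,k=1,…,n} = n! · (∏_{j=0}^{n−1} j!) · ∏_{k=1}^n M[ω](k). -/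
open MeasureTheory Finset

/-! The Mellin identity turns column `k` of the matrix into `M[ω](k+1)` times the Vandermonde
column of the node `k+1`, so the determinant factors as `∏ₖ M[ω](k+1)` times the Vandermonde
determinant of `1, …, n`, which is the superfactorial `∏_{j<n} j!`. -/

theorem Matrix.det_vandermonde_natCast_add_one {R : Type*} [CommRing R] (n : ℕ) :
    (Matrix.vandermonde fun k : Fin n => ((k : ℕ) : R) + 1).det
      = ∏ j ∈ range n, (j.factorial : R) := by
  cases n with
  | zero => simp
  | succ m =>
    rw [Matrix.det_vandermonde_add (fun i : Fin (m + 1) => ((i : ℕ) : R)) 1,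
      Matrix.det_vandermonde_id_eq_superFactorial, ← Nat.prod_range_succ_factorial m]
    push_cast
    rfl

theorem Matrix.det_of_pow_natCast_add_one_mul {R : Type*} [CommRing R] (n : ℕ) (c : ℕ → R) :
    (Matrix.of fun j k : Fin n => (((k : ℕ) : R) + 1) ^ (j : ℕ) * c k).det
      = (∏ j ∈ range n, (j.factorial : R)) * ∏ k ∈ range n, c k := by
  have hcol : (Matrix.of fun j k : Fin n => (((k : ℕ) : R) + 1) ^ (j : ℕ) * c k)
      = Matrix.of fun j k : Fin n =>
          c k * (Matrix.vandermonde fun k : Fin n => ((k : ℕ) : R) + 1).transpose j k := by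
    ext j k
    simp only [Matrix.of_apply, Matrix.transpose_apply, Matrix.vandermonde_apply, mul_comm]
  rw [hcol, Matrix.det_mul_row, Matrix.det_transpose, Matrix.det_vandermonde_natCast_add_one,
    Finset.prod_range fun k => c k, mul_comm]

theorem derivative_type_normalization_constant_general
    (n : ℕ) (ω : ℝ → ℂ)
    (D : (ℝ → ℂ) → (ℝ → ℂ))
    (hmellin : ∀ j < n, ∀ k < n,
      ∫ a in Set.Ioi (0 : ℝ), (a : ℂ) ^ k * D^[j] ω a
        = ((k : ℂ) + 1) ^ j * ∫ a in Set.Ioi (0 : ℝ), (a : ℂ) ^ k * ω a) :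
    (Nat.factorial n : ℂ) *
        Matrix.det (Matrix.of fun j k : Fin n =>
          ∫ a in Set.Ioi (0 : ℝ), (a : ℂ) ^ (k : ℕ) * D^[(j : ℕ)] ω a)
      = (Nat.factorial n : ℂ) *
          (∏ j ∈ Finset.range n, (Nat.factorial j : ℂ)) *
          ∏ k ∈ Finset.range n, ∫ a in Set.Ioi (0 : ℝ), (a : ℂ) ^ k * ω a := by
  have hentries : (Matrix.of fun j k : Fin n =>
      ∫ a in Set.Ioi (0 : ℝ), (a : ℂ) ^ (k : ℕ) * D^[(j : ℕ)] ω a)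
      = Matrix.of fun j k : Fin n =>
          (((k : ℕ) : ℂ) + 1) ^ (j : ℕ) * ∫ a in Set.Ioi (0 : ℝ), (a : ℂ) ^ (k : ℕ) * ω a := by
    ext j k
    exact hmellin j j.isLt k k.isLt
  rw [hentries, mul_assoc]
  exact congrArg _ (Matrix.det_of_pow_natCast_add_one_mul n
    fun k => ∫ a in Set.Ioi (0 : ℝ), (a : ℂ) ^ k * ω a)

/-- Normalization constant for polynomial ensembles of derivative type: with
`M[(−a∂_a)^{j}ω](k+1) = (k+1)^{j} M[ω](k+1)` (vanishing boundary terms), one has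
`n! · det[∫_0^∞ a^k (−a∂_a)^j ω(a) da]_{j,k=0,…,n−1}
  = n! · (∏_{j=0}^{n−1} j!) · ∏_{k=1}^n M[ω](k)`. -/
theorem derivative_type_normalization_constant
    (n : ℕ) (ω : ℝ → ℂ)
    (D : (ℝ → ℂ) → (ℝ → ℂ))
    (hD : D = fun (g : ℝ → ℂ) (y : ℝ) => -(y : ℂ) * deriv g y)
    (hdiff : ∀ j < n - 1, DifferentiableOn ℝ (D^[j] ω) (Set.Ioi (0 : ℝ)))
    (hint : ∀ j < n, ∀ k < n,
      IntegrableOn (fun a : ℝ => (a : ℂ) ^ k * D^[j] ω a) (Set.Ioi 0))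
    (hmellin : ∀ j < n, ∀ k < n,
      ∫ a in Set.Ioi (0 : ℝ), (a : ℂ) ^ k * D^[j] ω a
        = ((k : ℂ) + 1) ^ j * ∫ a in Set.Ioi (0 : ℝ), (a : ℂ) ^ k * ω a) :
    (Nat.factorial n : ℂ) *
        Matrix.det (Matrix.of fun j k : Fin n =>
          ∫ a in Set.Ioi (0 : ℝ), (a : ℂ) ^ (k : ℕ) * D^[(j : ℕ)] ω a)
      = (Nat.factorial n : ℂ) *
          (∏ j ∈ Finset.range n, (Nat.factorial j : ℂ)) *
          ∏ k ∈ Finset.range n, ∫ a in Set.Ioi (0 : ℝ), (a : ℂ) ^ k * ω a :=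
  derivative_type_normalization_constant_general n ω D hmellin
end
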